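/- Let f₀,…,fₙ be holomorphic functions on ℂᵖ whose common zero set is empty, and suppose that at a point where the map [f₀:⋯:fₙ] has differential of rank p ≤ n, local coordinates z₁,…,z_p can be chosen so that p of the affine coordinate functions f_{i₁}/f₀, …, f_{i_p}/f₀ equal z₁,…,z_p. If S = {Δ⁰,…,Δⁿ} is an admissible full family containing at most p−1 operators of order 1, then W_S(1, f₁/f₀, …, fₙ/f₀) ≡ 0 near that point. -/
import Mathlib


open scoped BigOperators

/-- Partial derivative `∂/∂z_i` of a function on `ℂᵖ`. -/
noncomputable def pderiv1 {p : ℕ} (i : Fin p) (f : (Fin p → ℂ) → ℂ) : (Fin p → ℂ) → ℂ :=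
  fun z => fderiv ℂ f z (Pi.single i 1)

/-- The mixed partial differential operator determined by a word over `{1,…,p}`. -/
noncomputable def wordDeriv {p : ℕ} (w : List (Fin p)) (f : (Fin p → ℂ) → ℂ) :
    (Fin p → ℂ) → ℂ :=
  w.foldr pderiv1 f

/-- An admissible family `S = {Δ⁰,…,Δⁿ}`: `Δ⁰ = id` and `ord Δˢ ≤ s`. -/
def Admissible {p n : ℕ} (S : Fin (n + 1) → List (Fin p)) : Prop :=
  S 0 = [] ∧ ∀ i, (S i).length ≤ (i : ℕ)

/-- A full set of words: closed under taking subwords. -/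
def FullFamily {p n : ℕ} (S : Fin (n + 1) → List (Fin p)) : Prop :=
  ∀ i, ∀ t : List (Fin p), t.Sublist (S i) → ∃ j, S j = t

/-- The generalized Wronskian `W_S(f₀,…,fₙ) = det (Δⁱ f_j)`. -/
noncomputable def genWronskian {p n : ℕ} (S : Fin (n + 1) → List (Fin p))
    (f : Fin (n + 1) → (Fin p → ℂ) → ℂ) : (Fin p → ℂ) → ℂ :=
  fun z => Matrix.det (Matrix.of fun i j => wordDeriv (S i) (f j) z)

lemma pderiv1_const {p : ℕ} (j : Fin p) (c : ℂ) :
    pderiv1 j (fun _ => c) = fun _ => 0 := by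
  funext z; simp [pderiv1, fderiv_const]

lemma wordDeriv_const {p : ℕ} (w : List (Fin p)) (hw : w ≠ []) (c : ℂ) :
    wordDeriv w (fun _ => c) = fun _ => 0 := by
  induction w with
  | nil => exact absurd rfl hw
  | cons a t ih =>
    rcases eq_or_ne t [] with rfl | ht
    · simp [wordDeriv, pderiv1_const]
    · show pderiv1 a (wordDeriv t (fun _ => c)) = _
      rw [ih ht]; exact pderiv1_const a 0

lemma pderiv1_coord {p : ℕ} (j k : Fin p) :
    pderiv1 j (fun z : Fin p → ℂ => z k) = fun _ => if j = k then 1 else 0 := by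
  funext z
  have h : fderiv ℂ (fun z : Fin p → ℂ => z k) z
      = (ContinuousLinearMap.proj k : (Fin p → ℂ) →L[ℂ] ℂ) :=
    (ContinuousLinearMap.proj k : (Fin p → ℂ) →L[ℂ] ℂ).fderiv
  simp only [pderiv1, h, ContinuousLinearMap.proj_apply]
  by_cases hjk : j = k
  · subst hjk; simp
  · simp [Pi.single_eq_of_ne (Ne.symm hjk), hjk]

lemma wordDeriv_coord {p : ℕ} (w : List (Fin p)) (hw : w ≠ []) (k : Fin p) :
    wordDeriv w (fun z : Fin p → ℂ => z k) = fun _ => if w = [k] then 1 else 0 := by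
  induction w with
  | nil => exact absurd rfl hw
  | cons a t ih =>
    rcases eq_or_ne t [] with rfl | ht
    · show pderiv1 a (fun z : Fin p → ℂ => z k) = _
      rw [pderiv1_coord]
      funext z
      by_cases hak : a = k <;> simp [hak]
    · show pderiv1 a (wordDeriv t (fun z : Fin p → ℂ => z k)) = _
      rw [ih ht, pderiv1_const]
      have : a :: t ≠ [k] := by
        intro h; apply ht; simpa using congrArg List.tail h
      simp [this]

lemma wordDeriv_congr_on {p : ℕ} (w : List (Fin p)) (g h : (Fin p → ℂ) → ℂ)
    (V : Set (Fin p → ℂ)) (hV : IsOpen V) (hgh : ∀ z ∈ V, g z = h z) :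
    ∀ z ∈ V, wordDeriv w g z = wordDeriv w h z := by
  induction w with
  | nil => exact hgh
  | cons a t ih =>
    intro z hz
    show pderiv1 a (wordDeriv t g) z = pderiv1 a (wordDeriv t h) z
    have heq : wordDeriv t g =ᶠ[nhds z] wordDeriv t h :=
      Filter.eventuallyEq_of_mem (hV.mem_nhds hz) (fun x hx => ih x hx)
    simp only [pderiv1, heq.fderiv_eq]

lemma det_eq_zero_of_col_smul {m : Type*} [DecidableEq m] [Fintype m]
    (M : Matrix m m ℂ) (i j : m) (hij : i ≠ j) (c : ℂ)
    (h : ∀ r, M r j = c * M r i) : M.det = 0 := by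
  have hM : M = M.updateCol j (c • fun r => M r i) := by
    ext r s
    rw [Matrix.updateCol_apply]
    split_ifs with hs
    · subst hs; simpa using h r
    · rfl
  rw [hM, Matrix.det_updateCol_smul, Matrix.det_updateCol_eq_zero hij, mul_zero]

/-- Let `f₀,…,fₙ` be entire on `ℂᵖ` with empty common zero set, and
suppose that near a point `z₀` one has `f₀ ≠ 0` and `p` of the affine coordinates
`f_{i_j}/f₀` coincide with the coordinates `z_j`. If `S` is an admissible full family
containing at most `p-1` operators of order `1`, then
`W_S(1, f₁/f₀, …, fₙ/f₀) ≡ 0` near `z₀`. -/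
theorem wronskian_vanishes_of_few_first_order (p n : ℕ) (hp : 1 ≤ p) (hpn : p ≤ n)
    (f : Fin (n + 1) → (Fin p → ℂ) → ℂ) (hf : ∀ j, Differentiable ℂ (f j))
    (hred : ∀ z, ∃ j, f j z ≠ 0)
    (z₀ : Fin p → ℂ) (ι : Fin p → Fin (n + 1)) (hι : Function.Injective ι)
    (hι0 : ∀ j, ι j ≠ 0)
    (hcoord : ∀ᶠ z in nhds z₀, f 0 z ≠ 0 ∧ ∀ j, f (ι j) z / f 0 z = z j)
    (S : Fin (n + 1) → List (Fin p)) (hS : Admissible S) (hfull : FullFamily S)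
    (hfew : ((Finset.univ.filter fun i => (S i).length = 1).image S).card ≤ p - 1) :
    ∀ᶠ z in nhds z₀, genWronskian S (fun j w => f j w / f 0 w) z = 0 := by
  -- pick a coordinate k such that the word [k] does not occur in S
  obtain ⟨k, hk⟩ : ∃ k : Fin p, ∀ i, S i ≠ [k] := by
    by_contra hcon
    push_neg at hcon
    set T := (Finset.univ.filter fun i => (S i).length = 1).image S with hT
    have hsub : ∀ k : Fin p, [k] ∈ T := by
      intro k
      obtain ⟨i, hi⟩ := hcon k
      refine Finset.mem_image.mpr ⟨i, ?_, hi⟩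
      simp [hi]
    have hinj : Function.Injective (fun k : Fin p => ([k] : List (Fin p))) := by
      intro a b hab; simpa using hab
    have := Finset.card_le_card_of_injOn (s := (Finset.univ : Finset (Fin p)))
      (fun k : Fin p => ([k] : List (Fin p))) (fun k _ => hsub k) (hinj.injOn)
    simp only [Finset.card_univ, Fintype.card_fin] at this
    omega
  -- extract an open neighborhood
  rcases mem_nhds_iff.mp hcoord with ⟨V, hVs, hVopen, hz₀V⟩
  filter_upwards [hVopen.mem_nhds hz₀V] with z hz
  have hf0 : ∀ w ∈ V, f 0 w / f 0 w = (1 : ℂ) := fun w hw => div_self (hVs hw).1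
  have hfk : ∀ w ∈ V, f (ι k) w / f 0 w = w k := fun w hw => (hVs hw).2 k
  set M : Matrix (Fin (n + 1)) (Fin (n + 1)) ℂ :=
    Matrix.of fun i j => wordDeriv (S i) (fun w => f j w / f 0 w) z with hM
  show M.det = 0
  refine det_eq_zero_of_col_smul M 0 (ι k) (Ne.symm (hι0 k)) (z k) ?_
  intro i
  have h1 : M i (ι k) = wordDeriv (S i) (fun w : Fin p → ℂ => w k) z :=
    wordDeriv_congr_on (S i) _ _ V hVopen hfk z hz
  have h2 : M i 0 = wordDeriv (S i) (fun _ => (1 : ℂ)) z :=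
    wordDeriv_congr_on (S i) _ _ V hVopen hf0 z hz
  rcases eq_or_ne (S i) [] with hSi | hSi
  · rw [h1, h2, hSi]
    show z k = z k * (1 : ℂ)
    rw [mul_one]
  · rw [h1, h2, wordDeriv_coord _ hSi, wordDeriv_const _ hSi]
    simp [hk i]
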